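/- Fix w ∈ ℝ^d with w ≠ 0, V ∈ ℝ^{d×k}, and u ∈ ℝ^d. Define the matrix G = ( w − u ; (1/‖w‖²)·w uᵀ V ), i.e. the concatenation of the vector w − u and the d×k matrix (1/‖w‖²)·w uᵀ V. Let F(w,V) = (1/n)·Σ_{i=1}^n ℓ(wᵀ(x_i + V f(x_i)); y_i) and F_lin(u) = (1/n)·Σ_{i=1}^n ℓ(uᵀx_i; y_i), with ℓ(·;y) differentiable and convex in its first argument. Then ⟨vec(G), ∇F(w,V)⟩ ≥ F(w,V) − F_lin(u), where ∇F(w,V) is the gradient of F with respect to the concatenated vector (w, vec(V)). -/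

import Mathlib

open scoped RealInnerProductSpace
open Finset

noncomputable section

/-- Euclidean column vectors in `ℝ^d`. -/
abbrev Vec (d : ℕ) : Type := EuclideanSpace ℝ (Fin d)

/-- The concatenated parameter vector `(w, vec(V))`. -/
abbrev Param (d k : ℕ) : Type := EuclideanSpace ℝ (Fin d ⊕ Fin d × Fin k)

/-- Pack `(w, V)` into a single Euclidean vector. -/
def pairWV {d k : ℕ} (w : Vec d) (V : Matrix (Fin d) (Fin k) ℝ) : Param d k :=
  (EuclideanSpace.equiv (Fin d ⊕ Fin d × Fin k) ℝ).symm
    (Sum.elim (fun i => w i) (fun p => V p.1 p.2))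

/-- The residual-network objective `F(w,V) = (1/n)·Σᵢ ℓ(wᵀ(xᵢ + V f(xᵢ)); yᵢ)`. -/
def netObj {d k n : ℕ} (ℓ : ℝ → ℝ → ℝ) (f : Vec d → Vec k)
    (x : Fin n → Vec d) (y : Fin n → ℝ) (z : Param d k) : ℝ :=
  (1 / (n : ℝ)) *
    ∑ i, ℓ (∑ j, z (Sum.inl j) * ((x i) j + ∑ l, z (Sum.inr (j, l)) * (f (x i)) l)) (y i)

/-- The linear-predictor objective `F_lin(u) = (1/n)·Σᵢ ℓ(uᵀxᵢ; yᵢ)`. -/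
def linObj {d n : ℕ} (ℓ : ℝ → ℝ → ℝ) (x : Fin n → Vec d) (y : Fin n → ℝ) (u : Vec d) : ℝ :=
  (1 / (n : ℝ)) * ∑ i, ℓ (∑ j, u j * (x i) j) (y i)

/-! At `z = (w, V)` the derivative of the predictor `aᵢ(z) = wᵀ(xᵢ + V f(xᵢ))` in the direction
`G = (w - u, w uᵀ V / ‖w‖²)` is `(w - u)ᵀ(xᵢ + V f(xᵢ)) + (wᵀw / ‖w‖²) uᵀ V f(xᵢ) = aᵢ(z) - uᵀxᵢ`:
the `V`-component of `G` exactly cancels the term `uᵀ V f(xᵢ)` created by the `w`-component.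
Hence `⟨G, ∇F⟩ = (1/n) Σᵢ ℓ'(aᵢ) (aᵢ - uᵀxᵢ)`, and the tangent-line inequality
`ℓ(a) - ℓ(b) ≤ ℓ'(a) (a - b)` of the convex loss bounds each term below by `ℓ(aᵢ) - ℓ(uᵀxᵢ)`. -/

open Matrix

lemma ConvexOn.sub_le_deriv_mul_sub {S : Set ℝ} {φ : ℝ → ℝ} {a b : ℝ} (hφ : ConvexOn ℝ S φ)
    (ha : a ∈ S) (hb : b ∈ S) (hd : DifferentiableAt ℝ φ a) :
    φ a - φ b ≤ deriv φ a * (a - b) := by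
  rcases lt_trichotomy a b with hab | rfl | hab
  · have h := hφ.deriv_le_slope ha hb hab hd
    rw [slope_def_field, le_div_iff₀ (sub_pos.mpr hab)] at h
    linarith
  · simp
  · have h := hφ.slope_le_deriv hb ha hab hd
    rw [slope_def_field, div_le_iff₀ (sub_pos.mpr hab)] at h
    linarith

theorem inner_gradient_ge_of_convexOn_comp {E ι : Type*} [NormedAddCommGroup E]
    [InnerProductSpace ℝ E] [CompleteSpace E] [Fintype ι] {φ : ι → ℝ → ℝ} {A : ι → E → ℝ}
    {A' : ι → E →L[ℝ] ℝ} {z G : E} {b : ι → ℝ} {c : ℝ} (hc : 0 ≤ c)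
    (hφ : ∀ i, ConvexOn ℝ Set.univ (φ i)) (hφd : ∀ i, DifferentiableAt ℝ (φ i) (A i z))
    (hA : ∀ i, HasFDerivAt (A i) (A' i) z) (hG : ∀ i, A' i G = A i z - b i) :
    c * ∑ i, φ i (A i z) - c * ∑ i, φ i (b i) ≤
      ⟪G, gradient (fun z => c * ∑ i, φ i (A i z)) z⟫ := by
  have hF : HasFDerivAt (fun z => c * ∑ i, φ i (A i z))
      (c • ∑ i, deriv (φ i) (A i z) • A' i) z :=
    (HasFDerivAt.fun_sum fun i _ => (hφd i).hasDerivAt.comp_hasFDerivAt z (hA i)).const_mul c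
  rw [inner_gradient_right, hF.fderiv]
  simp only [_root_.smul_apply, _root_.sum_apply, smul_eq_mul, hG,
    RCLike.conj_to_real, ← mul_sub, ← Finset.sum_sub_distrib]
  gcongr with i
  exact (hφ i).sub_le_deriv_mul_sub trivial trivial (hφd i)

section Predictor

variable {d k : ℕ}

@[simp]
theorem pairWV_apply_inl (w : Vec d) (V : Matrix (Fin d) (Fin k) ℝ) (j : Fin d) :
    pairWV w V (Sum.inl j) = w j := rfl

@[simp]
theorem pairWV_apply_inr (w : Vec d) (V : Matrix (Fin d) (Fin k) ℝ) (j : Fin d) (l : Fin k) :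
    pairWV w V (Sum.inr (j, l)) = V j l := rfl

def predictor (xi : Vec d) (fi : Vec k) (z : Param d k) : ℝ :=
  ∑ j, z (Sum.inl j) * (xi j + ∑ l, z (Sum.inr (j, l)) * fi l)

def predictorFDeriv (xi : Vec d) (fi : Vec k) (z : Param d k) : Param d k →L[ℝ] ℝ :=
  ∑ j, (z (Sum.inl j) • ∑ l, fi l • EuclideanSpace.proj (Sum.inr (j, l))
    + (xi j + ∑ l, z (Sum.inr (j, l)) * fi l) • EuclideanSpace.proj (Sum.inl j))

theorem hasFDerivAt_predictor (xi : Vec d) (fi : Vec k) (z : Param d k) :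
    HasFDerivAt (predictor xi fi) (predictorFDeriv xi fi z) z := by
  refine HasFDerivAt.fun_sum fun j _ => ?_
  have hw : HasFDerivAt (fun z : Param d k => z (Sum.inl j))
      (EuclideanSpace.proj (Sum.inl j) : Param d k →L[ℝ] ℝ) z :=
    (EuclideanSpace.proj (Sum.inl j) : Param d k →L[ℝ] ℝ).hasFDerivAt
  have hV : HasFDerivAt (fun z : Param d k => xi j + ∑ l, z (Sum.inr (j, l)) * fi l)
      (∑ l, fi l • (EuclideanSpace.proj (Sum.inr (j, l)) : Param d k →L[ℝ] ℝ)) z := by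
    simpa using (HasFDerivAt.fun_sum fun l _ =>
      ((EuclideanSpace.proj (Sum.inr (j, l)) : Param d k →L[ℝ] ℝ).hasFDerivAt.mul_const
        (fi l))).const_add (xi j)
  exact hw.mul hV

theorem predictor_pairWV (xi : Vec d) (fi : Vec k) (w : Vec d) (V : Matrix (Fin d) (Fin k) ℝ) :
    predictor xi fi (pairWV w V) = w.ofLp ⬝ᵥ (xi.ofLp + V *ᵥ fi.ofLp) := rfl

theorem predictorFDeriv_pairWV (xi : Vec d) (fi : Vec k) (w w' : Vec d)
    (V V' : Matrix (Fin d) (Fin k) ℝ) :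
    predictorFDeriv xi fi (pairWV w V) (pairWV w' V') =
      w'.ofLp ⬝ᵥ (xi.ofLp + V *ᵥ fi.ofLp) + w.ofLp ⬝ᵥ (V' *ᵥ fi.ofLp) := by
  simp only [predictorFDeriv, _root_.sum_apply, _root_.add_apply, _root_.smul_apply,
    EuclideanSpace.coe_proj, smul_eq_mul]
  rw [Finset.sum_add_distrib, add_comm]
  simp only [dotProduct, mulVec, Pi.add_apply, pairWV_apply_inl, pairWV_apply_inr,
    mul_comm (fi _)]
  exact congrArg (· + _) (Finset.sum_congr rfl fun j _ => mul_comm _ _)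

theorem predictorFDeriv_apply_descent (xi : Vec d) (fi : Vec k) (w u : Vec d)
    (V : Matrix (Fin d) (Fin k) ℝ) (hw : w ≠ 0) :
    predictorFDeriv xi fi (pairWV w V)
        (pairWV (w - u) ((‖w‖ ^ 2)⁻¹ • (vecMulVec (fun i => w i) (fun i => u i) * V))) =
      predictor xi fi (pairWV w V) - u.ofLp ⬝ᵥ xi.ofLp := by
  have hww : w.ofLp ⬝ᵥ w.ofLp = ‖w‖ ^ 2 := by
    rw [← real_inner_self_eq_norm_sq, EuclideanSpace.inner_eq_star_dotProduct, star_trivial]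
  have hnorm : ‖w‖ ^ 2 ≠ 0 := by positivity
  have hV' : ((‖w‖ ^ 2)⁻¹ • (vecMulVec (fun i => w i) (fun i => u i) * V)) *ᵥ fi.ofLp =
      ((‖w‖ ^ 2)⁻¹ * (u.ofLp ⬝ᵥ V *ᵥ fi.ofLp)) • w.ofLp := by
    rw [smul_mulVec, ← mulVec_mulVec, vecMulVec_mulVec, op_smul_eq_smul, smul_smul]
  rw [predictorFDeriv_pairWV, predictor_pairWV, hV', dotProduct_smul, hww, smul_eq_mul,
    mul_right_comm, inv_mul_cancel₀ hnorm, one_mul, WithLp.ofLp_sub, sub_dotProduct,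
    dotProduct_add u.ofLp]
  ring

end Predictor

/-- Lemma 1 of the paper: `⟨vec(G), ∇F(w,V)⟩ ≥ F(w,V) − F_lin(u)` where
`G = (w − u ; ‖w‖⁻²·w uᵀ V)`. -/
theorem inner_vecG_gradient_ge
    {d k n : ℕ} (ℓ : ℝ → ℝ → ℝ) (f : Vec d → Vec k)
    (x : Fin n → Vec d) (y : Fin n → ℝ)
    (hconv : ∀ y₀ : ℝ, ConvexOn ℝ Set.univ fun p => ℓ p y₀)
    (hdiff : ∀ y₀ : ℝ, Differentiable ℝ fun p => ℓ p y₀)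
    (w : Vec d) (hw : w ≠ 0) (V : Matrix (Fin d) (Fin k) ℝ) (u : Vec d) :
    ⟪pairWV (w - u) ((‖w‖ ^ 2)⁻¹ • (Matrix.vecMulVec (fun i => w i) (fun i => u i) * V)),
        gradient (netObj ℓ f x y) (pairWV w V)⟫ ≥
      netObj ℓ f x y (pairWV w V) - linObj ℓ x y u :=
  inner_gradient_ge_of_convexOn_comp (φ := fun i p => ℓ p (y i))
    (A := fun i => predictor (x i) (f (x i))) (b := fun i => u.ofLp ⬝ᵥ (x i).ofLp)
    (by positivity) (fun i => hconv (y i)) (fun i => hdiff (y i) _)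
    (fun i => hasFDerivAt_predictor _ _ _)
    (fun i => predictorFDeriv_apply_descent _ _ w u V hw)

end
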